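/- Let ε ∈ (0,1) and let C, Y₁, Y₂, R be mutually independent random variables, where C is Bernoulli with P(C = 1) = p ∈ [0,1], P(Y₁ < 1) = 1, P(Y₂ ≥ 1) = 1, and R is uniform on [1−ε, 1+ε]. Set Y′ = C·Y₁ + (1−C)·Y₂. Then E[1{RY′ ≤ 1+ε}] = p + (1−p)·E[1{Y₂ ∈ I₂}·((1+ε)/Y₂ − (1−ε))/(2ε)], where I₂ = [1, (1+ε)/(1−ε)]. -/

import Mathlib

open MeasureTheory ProbabilityTheory Real

/-- The uniform probability measure on the interval `[a, b]`. -/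
noncomputable def uniformIcc (a b : ℝ) : Measure ℝ :=
  (ENNReal.ofReal (b - a))⁻¹ • (MeasureTheory.volume.restrict (Set.Icc a b))

/-- The median of `2*n+1` real values: their `(n+1)`-st smallest value. -/
noncomputable def medianOf {n : ℕ} (v : Fin (2 * n + 1) → ℝ) : ℝ :=
  (Multiset.sort (↑(List.ofFn v)) (· ≤ ·)).get ⟨n, by simp; omega⟩

/-- The nuisance factor `f(ε) = (1+ε)/((1-ε)² (1+ε-ε²))`. -/
noncomputable def nuisance (ε : ℝ) : ℝ := (1 + ε) / ((1 - ε) ^ 2 * (1 + ε - ε ^ 2))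

/-!
On `{C = 1}` the event `R Y′ ≤ 1 + ε` is sure, because `R ≤ 1 + ε` and `Y₁ < 1`; on `{C = 0}` it is
`{R Y₂ ≤ 1 + ε}`. As `C` is independent of `(Y₂, R)`, the expectation is
`p + (1 - p) P(R Y₂ ≤ 1 + ε)`, and since `Y₂` and `R` are independent, Fubini computes this
probability as `E[F(Y₂)]` with `F(y) = P(R ≤ (1 + ε) / y)`. For `y ≥ 1` the uniform distribution
function gives `F(y) = ((1 + ε) / y - (1 - ε)) / (2ε)` on `I₂` and `F(y) = 0` on `I₃`.
-/

namespace ProbabilityTheory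

variable {Ω α β : Type*} [MeasurableSpace Ω] [MeasurableSpace α] [MeasurableSpace β]
  {μ : Measure Ω}

lemma ae_eq_zero_or_eq_one_of_measure_eq [IsProbabilityMeasure μ] {C : Ω → ℝ} (hC : Measurable C)
    {p : ℝ} (hp : p ∈ Set.Icc (0 : ℝ) 1) (hC1 : μ {ω | C ω = 1} = ENNReal.ofReal p)
    (hC0 : μ {ω | C ω = 0} = ENNReal.ofReal (1 - p)) :
    ∀ᵐ ω ∂μ, C ω = 0 ∨ C ω = 1 := by
  have hs0 : MeasurableSet {ω | C ω = 0} := hC (measurableSet_singleton 0)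
  have hs1 : MeasurableSet {ω | C ω = 1} := hC (measurableSet_singleton 1)
  have hdisj : Disjoint {ω | C ω = 0} {ω | C ω = 1} :=
    Set.disjoint_left.2 fun ω h0 h1 => zero_ne_one ((h0 : C ω = 0).symm.trans h1)
  refine (mem_ae_iff_prob_eq_one (hs0.union hs1)).2 ?_
  rw [measure_union hdisj hs1, hC0, hC1, ← ENNReal.ofReal_add (by linarith [hp.2]) hp.1]
  simp

lemma IndepFun.integral_comp_prodMk_eq_integral_integral [IsFiniteMeasure μ]
    {E : Type*} [NormedAddCommGroup E] [NormedSpace ℝ E] {X : Ω → α} {Y : Ω → β}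
    (hXY : IndepFun X Y μ) (hX : AEMeasurable X μ) (hY : AEMeasurable Y μ) {f : α × β → E}
    (hf : Integrable f ((μ.map X).prod (μ.map Y))) :
    ∫ ω, f (X ω, Y ω) ∂μ = ∫ x, ∫ y, f (x, y) ∂(μ.map Y) ∂(μ.map X) := by
  have hmap := (indepFun_iff_map_prod_eq_prod_map_map hX hY).1 hXY
  rw [← integral_map (hX.prodMk hY) (hmap ▸ hf.aestronglyMeasurable), hmap, integral_prod f hf]

lemma IndepFun.integral_indicator_one_add_comp_mul_indicator_zero [IsFiniteMeasure μ]
    {Z : Ω → α} {C : Ω → ℝ} (hZC : IndepFun Z C μ) (hZ : AEMeasurable Z μ) (hC : Measurable C)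
    {f : α → ℝ} (hf : Integrable f (μ.map Z)) :
    ∫ ω, ({1} : Set ℝ).indicator 1 (C ω) + f (Z ω) * ({0} : Set ℝ).indicator 1 (C ω) ∂μ =
      μ.real {ω | C ω = 1} + μ.real {ω | C ω = 0} * ∫ ω, f (Z ω) ∂μ := by
  have hs : ∀ x : ℝ, MeasurableSet (C ⁻¹' {x}) := fun x => hC (measurableSet_singleton x)
  have hind : Measurable (({0} : Set ℝ).indicator (1 : ℝ → ℝ)) :=
    measurable_one.indicator (measurableSet_singleton 0)
  have hprod : Integrable (fun ω => f (Z ω) * ({0} : Set ℝ).indicator 1 (C ω)) μ :=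
    (hf.comp_aemeasurable hZ).mul_bdd (c := 1) (hind.comp hC).aestronglyMeasurable
      (ae_of_all _ fun ω => (norm_indicator_le_norm_self _ _).trans (by simp))
  have hsel : Integrable (fun ω => ({1} : Set ℝ).indicator (1 : ℝ → ℝ) (C ω)) μ :=
    (integrable_const (1 : ℝ)).indicator (hs 1)
  rw [integral_add hsel hprod,
    hZC.integral_fun_comp_mul_comp hZ hC.aemeasurable hf.aestronglyMeasurable
      hind.aestronglyMeasurable, mul_comm]
  exact congrArg₂ (· + ·) (integral_indicator_one (hs 1))
    (congrArg (· * _) (integral_indicator_one (hs 0)))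

end ProbabilityTheory

section uniformIcc

variable {a b : ℝ}

lemma uniformIcc_apply {s : Set ℝ} (hs : MeasurableSet s) :
    uniformIcc a b s = (ENNReal.ofReal (b - a))⁻¹ * volume (s ∩ Set.Icc a b) := by
  simp [uniformIcc, Measure.restrict_apply hs]

lemma ae_mem_uniformIcc : ∀ᵐ x ∂uniformIcc a b, x ∈ Set.Icc a b :=
  Measure.ae_smul_measure (ae_restrict_mem measurableSet_Icc) _

lemma uniformIcc_real_Iic_of_mem {t : ℝ} (ht : t ∈ Set.Icc a b) :
    (uniformIcc a b).real (Set.Iic t) = (t - a) / (b - a) := by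
  have hinter : Set.Iic t ∩ Set.Icc a b = Set.Icc a t := by
    ext x
    simp only [Set.mem_inter_iff, Set.mem_Iic, Set.mem_Icc]
    exact ⟨fun h => ⟨h.2.1, h.1⟩, fun h => ⟨h.2, h.1, h.2.trans ht.2⟩⟩
  rw [measureReal_def, uniformIcc_apply measurableSet_Iic, hinter, Real.volume_Icc,
    ENNReal.toReal_mul, ENNReal.toReal_inv, ENNReal.toReal_ofReal (sub_nonneg.2 ht.1),
    ENNReal.toReal_ofReal (sub_nonneg.2 (ht.1.trans ht.2)), div_eq_inv_mul]

lemma uniformIcc_Iic_of_lt {t : ℝ} (ht : t < a) : uniformIcc a b (Set.Iic t) = 0 := by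
  have hinter : Set.Iic t ∩ Set.Icc a b = ∅ :=
    Set.eq_empty_of_forall_notMem fun x hx => (hx.1.trans_lt ht).not_ge hx.2.1
  rw [uniformIcc_apply measurableSet_Iic, hinter, measure_empty, mul_zero]

lemma integral_uniformIcc_indicator_mul_le {y : ℝ} (ha : 0 < a) (hy : 1 ≤ y) :
    ∫ r, {q : ℝ × ℝ | q.2 * q.1 ≤ b}.indicator 1 (y, r) ∂uniformIcc a b =
      if y ∈ Set.Icc 1 (b / a) then (b / y - a) / (b - a) else 0 := by
  have hy0 : 0 < y := one_pos.trans_le hy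
  have hind : (fun r => {q : ℝ × ℝ | q.2 * q.1 ≤ b}.indicator (1 : ℝ × ℝ → ℝ) (y, r)) =
      (Set.Iic (b / y)).indicator 1 := by
    ext r
    simp [Set.indicator_apply, le_div_iff₀ hy0]
  rw [hind, integral_indicator_one measurableSet_Iic]
  split_ifs with hmem
  · have hay : a * y ≤ b := by rw [mul_comm]; exact (le_div_iff₀ ha).1 hmem.2
    exact uniformIcc_real_Iic_of_mem
      ⟨(le_div_iff₀ hy0).2 hay, div_le_self ((mul_pos ha hy0).le.trans hay) hy⟩
  · have hlt : b / y < a := by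
      have hya : b / a < y := lt_of_not_ge fun h => hmem ⟨hy, h⟩
      rw [div_lt_iff₀ ha, mul_comm] at hya
      rwa [div_lt_iff₀ hy0]
    rw [measureReal_def, uniformIcc_Iic_of_lt hlt, ENNReal.toReal_zero]

end uniformIcc

lemma ite_mul_mixture_le_eq_indicator {b c r y₁ y₂ : ℝ} (hc : c = 0 ∨ c = 1) (hy₁ : y₁ < 1)
    (hr : r ∈ Set.Icc 0 b) :
    (if r * (c * y₁ + (1 - c) * y₂) ≤ b then (1 : ℝ) else 0) =
      ({1} : Set ℝ).indicator 1 c +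
        {q : ℝ × ℝ | q.2 * q.1 ≤ b}.indicator 1 (y₂, r) * ({0} : Set ℝ).indicator 1 c := by
  rcases hc with rfl | rfl
  · simp [Set.indicator_apply]
  · have hry : r * y₁ ≤ b := by nlinarith [mul_le_mul_of_nonneg_left hy₁.le hr.1, hr.2]
    simp [Set.indicator_apply, hry]

theorem expectation_indicator_formula {Ω : Type*} [MeasureSpace Ω]
    [IsProbabilityMeasure (ℙ : Measure Ω)]
    (ε p : ℝ) (hε : ε ∈ Set.Ioo (0 : ℝ) 1) (hp : p ∈ Set.Icc (0 : ℝ) 1)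
    (C Y₁ Y₂ R : Ω → ℝ)
    (hCm : Measurable C) (hY₁m : Measurable Y₁) (hY₂m : Measurable Y₂) (hRm : Measurable R)
    (hindep : iIndepFun ![C, Y₁, Y₂, R] ℙ)
    (hC1 : ℙ {ω | C ω = 1} = ENNReal.ofReal p)
    (hC0 : ℙ {ω | C ω = 0} = ENNReal.ofReal (1 - p))
    (hY₁ : ℙ {ω | Y₁ ω < 1} = 1)
    (hY₂ : ℙ {ω | 1 ≤ Y₂ ω} = 1)
    (hR : Measure.map R ℙ = uniformIcc (1 - ε) (1 + ε)) :
    ∫ ω, (if R ω * (C ω * Y₁ ω + (1 - C ω) * Y₂ ω) ≤ 1 + ε then (1 : ℝ) else 0) ∂ℙ =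
      p + (1 - p) *
        ∫ ω, (if Y₂ ω ∈ Set.Icc (1 : ℝ) ((1 + ε) / (1 - ε)) then
          ((1 + ε) / Y₂ ω - (1 - ε)) / (2 * ε) else 0) ∂ℙ := by
  set S : Set (ℝ × ℝ) := {q | q.2 * q.1 ≤ 1 + ε}
  set g : ℝ → ℝ := fun y => if y ∈ Set.Icc (1 : ℝ) ((1 + ε) / (1 - ε)) then
    ((1 + ε) / y - (1 - ε)) / (2 * ε) else 0
  have hS : ∀ (ν : Measure (ℝ × ℝ)) [IsFiniteMeasure ν], Integrable (S.indicator 1) ν :=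
    fun _ _ => (integrable_const (1 : ℝ)).indicator
      (measurableSet_le (measurable_snd.mul measurable_fst) measurable_const)
  have hmeas : ∀ i, Measurable (![C, Y₁, Y₂, R] i) := by
    intro i; fin_cases i <;> assumption
  have hYR_C : IndepFun (fun ω => (Y₂ ω, R ω)) C ℙ := by
    simpa using hindep.indepFun_prodMk hmeas 2 3 0 (by decide) (by decide)
  have hY₂R : IndepFun Y₂ R ℙ := by
    simpa using hindep.indepFun (show (2 : Fin 4) ≠ 3 by decide)
  have hsplit : (fun ω => if R ω * (C ω * Y₁ ω + (1 - C ω) * Y₂ ω) ≤ 1 + ε then (1 : ℝ) else 0)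
      =ᵐ[ℙ] fun ω => ({1} : Set ℝ).indicator 1 (C ω) +
        S.indicator 1 (Y₂ ω, R ω) * ({0} : Set ℝ).indicator 1 (C ω) := by
    filter_upwards [ae_eq_zero_or_eq_one_of_measure_eq hCm hp hC1 hC0,
      (mem_ae_iff_prob_eq_one (measurableSet_lt hY₁m measurable_const)).2 hY₁,
      ae_of_ae_map hRm.aemeasurable (hR ▸ ae_mem_uniformIcc)] with ω hc hy hr
    exact ite_mul_mixture_le_eq_indicator hc hy ⟨by linarith [hr.1, hε.2], hr.2⟩
  have hinner : ∀ᵐ y ∂(Measure.map Y₂ ℙ), ∫ r, S.indicator 1 (y, r) ∂(Measure.map R ℙ) = g y := by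
    filter_upwards [(ae_map_iff hY₂m.aemeasurable measurableSet_Ici).2
      ((mem_ae_iff_prob_eq_one (measurableSet_le measurable_const hY₂m)).2 hY₂)] with y hy
    rw [hR, integral_uniformIcc_indicator_mul_le (sub_pos.2 hε.2) hy,
      show 1 + ε - (1 - ε) = 2 * ε by ring]
  have hg : Measurable g := Measurable.ite measurableSet_Icc (by fun_prop) measurable_const
  rw [integral_congr_ae hsplit, hYR_C.integral_indicator_one_add_comp_mul_indicator_zero
      (hY₂m.prodMk hRm).aemeasurable hCm (hS _),
    hY₂R.integral_comp_prodMk_eq_integral_integral hY₂m.aemeasurable hRm.aemeasurable (hS _),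
    integral_congr_ae hinner, integral_map hY₂m.aemeasurable hg.aestronglyMeasurable,
    measureReal_def, measureReal_def, hC1, hC0, ENNReal.toReal_ofReal hp.1,
    ENNReal.toReal_ofReal (sub_nonneg.2 hp.2)]
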